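/- arXiv:1209.0183 — 4 statements merged into one kernel-verified Lean document; each statement's English description precedes it below -/
import Mathlib

section
/- Let α be irrational with convergents pₙ/qₙ. If p, q are integers with q > 0, gcd(p,q)=1, and |qα − p| < 1/(2q), then (p, q) = (pₙ, qₙ) for some n ∈ ℕ. -/
/-!
Write `x₀ = α`, `xₙ₊₁ = 1 / fract xₙ` for the complete quotients of `α`. Mathlib's
`Real.convergent` is defined by recursion on the head of the expansion,
`α.convergent (n + 1) = ⌊α⌋ + 1 / (x₁.convergent n)`, so `pₙ / qₙ = α.convergent n` follows by
induction on `n` once one sees that the numerators and denominators of the convergents of `x₁`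
are `qₙ₊₁` and `pₙ₊₁ - a₀ qₙ₊₁`. Since `pₙ qₙ₊₁ - pₙ₊₁ qₙ = ±1` and `qₙ > 0`, the fraction
`pₙ / qₙ` is reduced, and Legendre's theorem `Real.exists_rat_eq_convergent` identifies `P / Q`
with one of them.
-/

open Int

namespace Real

noncomputable def completeQuotient (ξ : ℝ) (n : ℕ) : ℝ :=
  (fun y : ℝ => (fract y)⁻¹)^[n] ξ

@[simp]
theorem completeQuotient_zero (ξ : ℝ) : ξ.completeQuotient 0 = ξ := rfl

theorem completeQuotient_succ (ξ : ℝ) (n : ℕ) :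
    ξ.completeQuotient (n + 1) = (fract (ξ.completeQuotient n))⁻¹ :=
  Function.iterate_succ_apply' _ n ξ

theorem completeQuotient_succ' (ξ : ℝ) (n : ℕ) :
    ξ.completeQuotient (n + 1) = (fract ξ)⁻¹.completeQuotient n :=
  Function.iterate_succ_apply _ n ξ

theorem _root_.Irrational.inv_fract {ξ : ℝ} (h : Irrational ξ) : Irrational (fract ξ)⁻¹ :=
  (h.sub_intCast ⌊ξ⌋).inv

theorem _root_.Irrational.completeQuotient {ξ : ℝ} (h : Irrational ξ) (n : ℕ) :
    Irrational (ξ.completeQuotient n) := by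
  induction n with
  | zero => exact h
  | succ n ih => rw [completeQuotient_succ]; exact ih.inv_fract

theorem one_le_floor_inv_fract {ξ : ℝ} (h : fract ξ ≠ 0) : 1 ≤ ⌊(fract ξ)⁻¹⌋ := by
  have hpos : 0 < fract ξ := (fract_nonneg ξ).lt_of_ne' h
  exact le_floor.mpr (by simpa using one_le_inv₀ hpos |>.mpr (fract_lt_one ξ).le)

theorem one_le_floor_completeQuotient_succ {ξ : ℝ} (h : Irrational ξ) (n : ℕ) :
    1 ≤ ⌊ξ.completeQuotient (n + 1)⌋ := by
  rw [completeQuotient_succ]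
  exact one_le_floor_inv_fract <|
    fract_ne_zero_iff.mpr fun ⟨m, hm⟩ => (h.completeQuotient n).ne_int m hm.symm

end Real

structure IsConvergentNumDen {R : Type*} [CommRing R] (a p q : ℕ → R) : Prop where
  p_zero : p 0 = a 0
  q_zero : q 0 = 1
  p_one : p 1 = a 1 * a 0 + 1
  q_one : q 1 = a 1
  p_add_two : ∀ n, p (n + 2) = a (n + 2) * p (n + 1) + p n
  q_add_two : ∀ n, q (n + 2) = a (n + 2) * q (n + 1) + q n

namespace IsConvergentNumDen

section CommRing

variable {R : Type*} [CommRing R] {a p q : ℕ → R}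

theorem det (h : IsConvergentNumDen a p q) (n : ℕ) :
    p n * q (n + 1) - p (n + 1) * q n = (-1) ^ (n + 1) := by
  induction n with
  | zero => rw [h.p_zero, h.q_zero, h.p_one, h.q_one]; ring
  | succ n ih => rw [h.p_add_two, h.q_add_two, pow_succ, ← ih]; ring

theorem isCoprime (h : IsConvergentNumDen a p q) (n : ℕ) : IsCoprime (p n) (q n) := by
  refine ⟨(-1) ^ (n + 1) * q (n + 1), -((-1) ^ (n + 1) * p (n + 1)), ?_⟩
  have hsq : ((-1 : R) ^ (n + 1)) ^ 2 = 1 := by rw [← pow_mul, pow_mul', neg_one_sq, one_pow]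
  linear_combination (-1) ^ (n + 1) * h.det n + hsq

theorem shift (h : IsConvergentNumDen a p q) :
    IsConvergentNumDen (fun n => a (n + 1)) (fun n => q (n + 1))
      (fun n => p (n + 1) - a 0 * q (n + 1)) where
  p_zero := h.q_one
  q_zero := by simp only [h.p_one, h.q_one]; ring
  p_one := by simp only [h.q_add_two, h.q_zero, h.q_one]
  q_one := by simp only [h.p_add_two, h.q_add_two, h.p_zero, h.q_zero, h.p_one, h.q_one]; ring
  p_add_two n := h.q_add_two (n + 1)
  q_add_two n := by simp only [h.p_add_two (n + 1), h.q_add_two (n + 1)]; ring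

end CommRing

theorem one_le_q {R : Type*} [CommRing R] [LinearOrder R] [IsStrictOrderedRing R] {a p q : ℕ → R}
    (h : IsConvergentNumDen a p q) (ha : ∀ n, 1 ≤ a (n + 1)) (n : ℕ) : 1 ≤ q n := by
  suffices ∀ n, 1 ≤ q n ∧ 1 ≤ q (n + 1) from (this n).1
  intro n
  induction n with
  | zero => exact ⟨h.q_zero.ge, h.q_one ▸ ha 0⟩
  | succ n ih =>
    refine ⟨ih.2, ?_⟩
    rw [h.q_add_two]
    nlinarith [ha (n + 1), ih.1, ih.2]

theorem convergent_eq {ξ : ℝ} (hξ : Irrational ξ) {p q : ℕ → ℤ}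
    (h : IsConvergentNumDen (fun n => ⌊ξ.completeQuotient n⌋) p q) (n : ℕ) :
    ξ.convergent n = (p n : ℚ) / q n := by
  induction n generalizing ξ p q with
  | zero => simp [h.p_zero, h.q_zero]
  | succ n ih =>
    have hshift := h.shift
    simp only [Real.completeQuotient_succ'] at hshift
    have hq : (q (n + 1) : ℚ) ≠ 0 := by
      have := h.one_le_q (Real.one_le_floor_completeQuotient_succ hξ) (n + 1)
      exact_mod_cast (by omega : q (n + 1) ≠ 0)
    rw [Real.convergent_succ, ih hξ.inv_fract hshift, inv_div]
    simp only [Real.completeQuotient_zero]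
    field_simp
    push_cast
    ring

end IsConvergentNumDen

theorem exists_div_eq_convergent {ξ : ℝ} {P Q : ℤ} (hQ : 0 < Q) (hPQ : IsCoprime P Q)
    (h : |Q * ξ - P| < 1 / (2 * Q)) : ∃ n, ((P : ℚ) / Q) = ξ.convergent n := by
  apply Real.exists_rat_eq_convergent
  have hQR : (0 : ℝ) < Q := by exact_mod_cast hQ
  have hden : (((P : ℚ) / Q).den : ℝ) = Q := by
    exact_mod_cast Rat.den_div_eq_of_coprime hQ (isCoprime_iff_nat_coprime.mp hPQ)
  have hdist : |ξ - ((P / Q : ℚ) : ℝ)| = |Q * ξ - P| / Q := by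
    rw [← abs_of_pos hQR, ← abs_div, abs_of_pos hQR]
    push_cast
    congr 1
    field_simp
  rw [hden, hdist, div_lt_iff₀ hQR]
  calc |Q * ξ - P| < 1 / (2 * Q) := h
    _ = 1 / (2 * Q ^ 2) * Q := by field_simp

/-- Legendre's theorem: if `α` is irrational with convergents `pₙ/qₙ` and `p, q` are
coprime integers with `q > 0` and `|qα − p| < 1/(2q)`, then `(p, q) = (pₙ, qₙ)`
for some `n`. -/
theorem good_approximations_are_convergents (α : ℝ) (hirr : Irrational α)
    (a : ℕ → ℤ) (x : ℕ → ℝ)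
    (hx0 : x 0 = α)
    (ha : ∀ n, a n = ⌊x n⌋)
    (hx : ∀ n, x (n + 1) = 1 / (x n - a n))
    (p q : ℕ → ℤ)
    (hp0 : p 0 = a 0) (hq0 : q 0 = 1)
    (hp1 : p 1 = a 1 * a 0 + 1) (hq1 : q 1 = a 1)
    (hp : ∀ n, p (n + 2) = a (n + 2) * p (n + 1) + p n)
    (hq : ∀ n, q (n + 2) = a (n + 2) * q (n + 1) + q n) :
    ∀ P Q : ℤ, 0 < Q → IsCoprime P Q → |(Q : ℝ) * α - (P : ℝ)| < 1 / (2 * (Q : ℝ)) →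
      ∃ n : ℕ, P = p n ∧ Q = q n := by
  intro P Q hQ hPQ happ
  have hx_eq : ∀ n, x n = α.completeQuotient n := by
    intro n
    induction n with
    | zero => exact hx0
    | succ n ih => rw [hx, ha, Real.completeQuotient_succ, ← ih, one_div, fract]
  have hpq : IsConvergentNumDen (fun n => ⌊α.completeQuotient n⌋) p q := by
    simp only [← hx_eq, ← ha]
    exact ⟨hp0, hq0, hp1, hq1, hp, hq⟩
  have hq_pos : ∀ n, 0 < q n := hpq.one_le_q (Real.one_le_floor_completeQuotient_succ hirr)
  obtain ⟨n, hn⟩ := exists_div_eq_convergent hQ hPQ happ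
  rw [hpq.convergent_eq hirr] at hn
  exact ⟨n, Rat.div_int_inj hQ (hq_pos n) (isCoprime_iff_nat_coprime.mp hPQ)
    (isCoprime_iff_nat_coprime.mp (hpq.isCoprime n)) hn⟩
end

section
/- Let C ⊂ ℝᵈ \ {0} be an open convex cone whose closure contains no 1-dimensional linear subspace, equipped with the Hilbert pseudo-metric d_C. If A is a linear map with A(C) ⊂ C and A(C) has diameter D < ∞ in d_C, then for all x, y ∈ C, d_C(Ax, Ay) ≤ δ·d_C(x,y) where δ = (√(e^D) − 1)/(√(e^D) + 1). -/
/-- The Birkhoff gauge `M(x/y) = inf {t > 0 | t•y − x ∈ closure C}` of a cone `C`. -/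
noncomputable def coneGauge {d : ℕ} (C : Set (Fin d → ℝ)) (x y : Fin d → ℝ) : ℝ :=
  sInf {t : ℝ | 0 < t ∧ t • y - x ∈ closure C}

/-- The Hilbert pseudo-metric on a cone `C`,
`d_C(x,y) = log (M(x/y)·M(y/x))`; on `ℝ²₊` this equals `log max_{i,j} (xᵢyⱼ)/(xⱼyᵢ)`. -/
noncomputable def hilbertDist {d : ℕ} (C : Set (Fin d → ℝ)) (x y : Fin d → ℝ) : ℝ :=
  Real.log (coneGauge C x y * coneGauge C y x)

/-!
For `x, y ∈ C` let `β = M(x/y)` and `α = 1/M(y/x)`, so that `x - αy` and `βy - x` lie in `∂C`.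
For `a < α` and `b > β` the vectors `u = x - ay` and `v = by - x` lie in `C`, hence
`d_C(Au, Av) ≤ D`, i.e. the gauges `λ = M(Au/Av)`, `μ = M(Av/Au)` satisfy `λμ ≤ k²` with
`k = √(e^D)`. Since `Ax` and `Ay` are positive combinations of `Au` and `Av`, this bounds
`M(Ax/Ay) M(Ay/Ax)` by a rational function of `b/a`, `λ` and `μ`; maximizing over `λμ ≤ k²` and
a one-variable monotonicity argument give `d_C(Ax, Ay) ≤ (k - 1)/(k + 1) · log (b/a)`, and
`log (b/a) → log (β/α) = d_C(x, y)`.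
-/

open Real Set Filter Topology Pointwise

lemma log_mul_add_one_div_add_le {k r : ℝ} (hk : 1 ≤ k) (hr : 1 ≤ r) :
    log ((k * r + 1) / (k + r)) ≤ (k - 1) / (k + 1) * log r := by
  set δ := (k - 1) / (k + 1) with hδ
  let f : ℝ → ℝ := fun t ↦ δ * log t - log (k * t + 1) + log (k + t)
  have hf' : ∀ t, 0 < t → HasDerivAt f (δ * t⁻¹ - k / (k * t + 1) + 1 / (k + t)) t := by
    intro t ht
    have h₁ : HasDerivAt (fun t ↦ k * t + 1) k t := by
      simpa using ((hasDerivAt_id t).const_mul k).add_const 1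
    have h₂ : HasDerivAt (fun t ↦ k + t) 1 t := (hasDerivAt_id t).const_add k
    exact (((hasDerivAt_log ht.ne').const_mul δ).sub (h₁.log (by positivity))).add
      (h₂.log (by positivity))
  have hmono : MonotoneOn f (Ici 1) := by
    refine monotoneOn_of_hasDerivWithinAt_nonneg (convex_Ici 1)
      (fun t ht ↦ (hf' t (zero_lt_one.trans_le ht)).continuousAt.continuousWithinAt)
      (fun t ht ↦ (hf' t ?_).hasDerivWithinAt) fun t ht ↦ ?_ <;>
      rw [interior_Ici, mem_Ioi] at ht
    · exact zero_lt_one.trans ht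
    · rw [show δ * t⁻¹ - k / (k * t + 1) + 1 / (k + t)
          = (k - 1) * k * (t - 1) ^ 2 / ((k + 1) * t * (k * t + 1) * (k + t)) by
        rw [hδ]; field_simp; ring]
      have : 0 ≤ k - 1 := by linarith
      positivity
  have hf1r : f 1 ≤ f r := hmono self_mem_Ici hr hr
  simp only [f, log_one, mul_zero, mul_one, zero_sub] at hf1r
  rw [log_div (by positivity) (by positivity)]
  linarith

lemma birkhoff_ratio_le_sq {k r l m : ℝ} (hk : 1 ≤ k) (hr : 1 ≤ r) (hl : 0 < l) (hm : 0 < m)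
    (hlm : l * m ≤ k ^ 2) :
    (l * r ^ 2 + 1) / (1 + l) * ((1 + m) / (r ^ 2 + m)) ≤ ((k * r + 1) / (k + r)) ^ 2 := by
  have hr0 : 0 < r := by linarith
  have hk0 : 0 < k := by linarith
  calc (l * r ^ 2 + 1) / (1 + l) * ((1 + m) / (r ^ 2 + m))
      ≤ (l * r ^ 2 + 1) / (1 + l) * ((l + k ^ 2) / (l * r ^ 2 + k ^ 2)) := by
        -- `(1 + m) / (r ^ 2 + m)` increases with `m`, and `m ≤ k ^ 2 / l`
        refine mul_le_mul_of_nonneg_left ?_ (by positivity)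
        rw [div_le_div_iff₀ (by positivity) (by positivity)]
        nlinarith [mul_nonneg (sub_nonneg.2 hlm) (by nlinarith : (0:ℝ) ≤ r ^ 2 - 1)]
    _ ≤ ((k * r + 1) / (k + r)) ^ 2 := by
        -- cross-multiplied, the difference of the two sides is `(k² - 1)(r² - 1)(rl - k)²`
        rw [div_mul_div_comm, div_pow, div_le_div_iff₀ (by positivity) (by positivity)]
        nlinarith [mul_nonneg (mul_nonneg (by nlinarith : (0:ℝ) ≤ k ^ 2 - 1)
          (by nlinarith : (0:ℝ) ≤ r ^ 2 - 1)) (sq_nonneg (r * l - k))]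

lemma log_birkhoff_ratio_le {k a b l m : ℝ} (hk : 1 ≤ k) (ha : 0 < a) (hab : a ≤ b)
    (hl : 0 < l) (hm : 0 < m) (hlm : l * m ≤ k ^ 2) :
    log ((l * b + a) / (1 + l) * ((1 + m) / (b + m * a))) ≤ (k - 1) / (k + 1) * log (b / a) := by
  have hb0 : 0 < b := ha.trans_le hab
  set r := √(b / a)
  have hr : 1 ≤ r := one_le_sqrt.2 ((one_le_div ha).2 hab)
  have hr2 : r ^ 2 = b / a := sq_sqrt (by positivity)
  have hb : b = a * r ^ 2 := by rw [hr2, mul_div_cancel₀ _ ha.ne']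
  have hratio : (l * b + a) / (1 + l) * ((1 + m) / (b + m * a))
      = (l * r ^ 2 + 1) / (1 + l) * ((1 + m) / (r ^ 2 + m)) := by
    rw [hb]; field_simp
  calc log ((l * b + a) / (1 + l) * ((1 + m) / (b + m * a)))
      ≤ log (((k * r + 1) / (k + r)) ^ 2) :=
        log_le_log (by positivity) (hratio ▸ birkhoff_ratio_le_sq hk hr hl hm hlm)
    _ = 2 * log ((k * r + 1) / (k + r)) := by rw [log_pow]; norm_num
    _ ≤ 2 * ((k - 1) / (k + 1) * log r) := by
        gcongr; exact log_mul_add_one_div_add_le hk hr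
    _ = (k - 1) / (k + 1) * log (b / a) := by rw [← hr2, log_pow]; push_cast; ring

section Cone

variable {E : Type*} [AddCommGroup E] [Module ℝ E]

structure IsOpenSalientCone [TopologicalSpace E] (C : Set E) : Prop where
  isOpen : IsOpen C
  convex : Convex ℝ C
  zero_notMem : (0 : E) ∉ C
  smul_mem : ∀ x ∈ C, ∀ r : ℝ, 0 < r → r • x ∈ C
  closure_no_line : ∀ x : E, x ≠ 0 → ¬((Submodule.span ℝ {x} : Set E) ⊆ closure C)

variable {C : Set E} {x y : E}

lemma add_mem_of_convex_of_smul_mem (hconv : Convex ℝ C)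
    (hcone : ∀ x ∈ C, ∀ r : ℝ, 0 < r → r • x ∈ C) (hx : x ∈ C) (hy : y ∈ C) :
    x + y ∈ C := by
  have hmid : (1 / 2 : ℝ) • x + (1 / 2 : ℝ) • y ∈ C := hconv hx hy (by norm_num) (by norm_num)
    (by norm_num)
  convert hcone _ hmid 2 two_pos using 1
  module

lemma smul_mem_closure_of_smul_mem [TopologicalSpace E] [ContinuousConstSMul ℝ E]
    (hcone : ∀ x ∈ C, ∀ r : ℝ, 0 < r → r • x ∈ C)
    (hx : x ∈ closure C) {r : ℝ} (hr : 0 < r) : r • x ∈ closure C :=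
  map_mem_closure (continuous_const_smul r) hx fun z hz ↦ hcone z hz r hr

lemma add_mem_closure_of_convex_of_smul_mem [TopologicalSpace E] [ContinuousAdd E]
    (hconv : Convex ℝ C) (hcone : ∀ x ∈ C, ∀ r : ℝ, 0 < r → r • x ∈ C)
    (hx : x ∈ closure C) (hy : y ∈ closure C) : x + y ∈ closure C :=
  map_mem_closure₂ continuous_add hx hy fun _ ha _ hb ↦
    add_mem_of_convex_of_smul_mem hconv hcone ha hb

lemma add_mem_of_mem_closure [TopologicalSpace E] [IsTopologicalAddGroup E] (hopen : IsOpen C)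
    (hconv : Convex ℝ C) (hcone : ∀ x ∈ C, ∀ r : ℝ, 0 < r → r • x ∈ C) (hx : x ∈ C)
    (hy : y ∈ closure C) : x + y ∈ C := by
  have hxy : x + y ∈ C + closure C := add_mem_add hx hy
  rw [hopen.add_closure] at hxy
  obtain ⟨a, ha, b, hb, hab⟩ := hxy
  exact hab ▸ add_mem_of_convex_of_smul_mem hconv hcone ha hb

lemma smul_notMem_closure_of_neg [TopologicalSpace E] [ContinuousAdd E]
    [ContinuousConstSMul ℝ E] (hconv : Convex ℝ C) (hcone : ∀ x ∈ C, ∀ r : ℝ, 0 < r → r • x ∈ C)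
    (hline : ∀ x : E, x ≠ 0 → ¬((Submodule.span ℝ {x} : Set E) ⊆ closure C))
    (hx : x ∈ closure C) (hx0 : x ≠ 0) {c : ℝ} (hc : c < 0) : c • x ∉ closure C := by
  intro hcx
  refine hline x hx0 fun z hz ↦ ?_
  obtain ⟨a, rfl⟩ := Submodule.mem_span_singleton.1 hz
  rcases lt_trichotomy a 0 with ha | rfl | ha
  · convert smul_mem_closure_of_smul_mem hcone hcx (div_pos_of_neg_of_neg ha hc) using 1
    rw [smul_smul, div_mul_cancel₀ _ hc.ne]
  · convert add_mem_closure_of_convex_of_smul_mem hconv hcone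
      (smul_mem_closure_of_smul_mem hcone hx (neg_pos.2 hc)) hcx using 1
    module
  · exact smul_mem_closure_of_smul_mem hcone hx ha

end Cone

section Gauge

variable {d : ℕ} {C : Set (Fin d → ℝ)} {x y : Fin d → ℝ}

lemma coneGauge_nonneg : 0 ≤ coneGauge C x y :=
  Real.sInf_nonneg fun _ ht ↦ ht.1.le

lemma coneGauge_le_div (hcone : ∀ x ∈ C, ∀ r : ℝ, 0 < r → r • x ∈ C) {s t : ℝ}
    (hs : 0 < s) (ht : 0 < t) (h : s • y - t • x ∈ closure C) : coneGauge C x y ≤ s / t := by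
  refine csInf_le ⟨0, fun _ hr ↦ hr.1.le⟩ ⟨div_pos hs ht, ?_⟩
  convert smul_mem_closure_of_smul_mem hcone h (inv_pos.2 ht) using 1
  rw [smul_sub, smul_smul, smul_smul, inv_mul_cancel₀ ht.ne', one_smul, div_eq_inv_mul]

lemma smul_coneGauge_sub_mem_closure (hopen : IsOpen C)
    (hcone : ∀ x ∈ C, ∀ r : ℝ, 0 < r → r • x ∈ C) (hy : y ∈ C) :
    coneGauge C x y • y - x ∈ closure C := by
  set S := {t : ℝ | 0 < t ∧ t • y - x ∈ closure C}
  have hS : S.Nonempty := by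
    have hnear : ∀ᶠ s in 𝓝[>] (0 : ℝ), y - s • x ∈ C := by
      refine nhdsWithin_le_nhds (ContinuousAt.eventually_mem (by fun_prop) ?_)
      simpa using hopen.mem_nhds hy
    obtain ⟨s, hs, hs0⟩ := (hnear.and self_mem_nhdsWithin).exists
    refine ⟨s⁻¹, inv_pos.2 hs0, subset_closure ?_⟩
    convert hcone _ hs s⁻¹ (inv_pos.2 hs0) using 1
    rw [smul_sub, smul_smul, inv_mul_cancel₀ (ne_of_gt hs0), one_smul]
  have hclosed : IsClosed {t : ℝ | t • y - x ∈ closure C} :=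
    isClosed_closure.preimage (by fun_prop)
  exact closure_minimal (fun t ht ↦ ht.2) hclosed (csInf_mem_closure hS ⟨0, fun _ ht ↦ ht.1.le⟩)

lemma smul_sub_mem_of_coneGauge_lt (hopen : IsOpen C) (hconv : Convex ℝ C)
    (hcone : ∀ x ∈ C, ∀ r : ℝ, 0 < r → r • x ∈ C) (hy : y ∈ C) {b : ℝ}
    (hb : coneGauge C x y < b) : b • y - x ∈ C := by
  convert add_mem_of_mem_closure hopen hconv hcone (hcone y hy _ (sub_pos.2 hb))
    (smul_coneGauge_sub_mem_closure hopen hcone (x := x) hy) using 1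
  module

lemma sub_smul_mem_of_lt_inv_coneGauge (hopen : IsOpen C) (hconv : Convex ℝ C)
    (hcone : ∀ x ∈ C, ∀ r : ℝ, 0 < r → r • x ∈ C) (hx : x ∈ C) {a : ℝ} (ha : 0 < a)
    (h : a < (coneGauge C y x)⁻¹) : x - a • y ∈ C := by
  have hlt : coneGauge C y x < a⁻¹ := (lt_inv_comm₀ ha (inv_pos.1 (ha.trans h))).1 h
  convert hcone _ (smul_sub_mem_of_coneGauge_lt hopen hconv hcone hx hlt) a ha using 1
  rw [smul_sub, smul_smul, mul_inv_cancel₀ ha.ne', one_smul]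

namespace IsOpenSalientCone

lemma coneGauge_pos (hC : IsOpenSalientCone C) (hx : x ∈ C) (hy : y ∈ C) :
    0 < coneGauge C x y := by
  refine coneGauge_nonneg.lt_of_ne fun h ↦ ?_
  have hnx := smul_coneGauge_sub_mem_closure hC.isOpen hC.smul_mem (x := x) hy
  rw [← h, zero_smul, zero_sub, ← neg_one_smul ℝ x] at hnx
  exact smul_notMem_closure_of_neg hC.convex hC.smul_mem hC.closure_no_line (subset_closure hx)
    (ne_of_mem_of_not_mem hx hC.zero_notMem) neg_one_lt_zero hnx

lemma one_le_coneGauge_mul (hC : IsOpenSalientCone C) (hx : x ∈ C) (hy : y ∈ C) :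
    1 ≤ coneGauge C x y * coneGauge C y x := by
  set l := coneGauge C x y
  set m := coneGauge C y x
  by_contra! hlt
  have hl := smul_coneGauge_sub_mem_closure hC.isOpen hC.smul_mem (x := x) hy
  have hm := smul_coneGauge_sub_mem_closure hC.isOpen hC.smul_mem (x := y) hx
  have hsum : l • (m • x - y) + (l • y - x) ∈ closure C :=
    add_mem_closure_of_convex_of_smul_mem hC.convex hC.smul_mem
      (smul_mem_closure_of_smul_mem hC.smul_mem hm (hC.coneGauge_pos hx hy)) hl
  rw [show l • (m • x - y) + (l • y - x) = (l * m - 1) • x by module] at hsum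
  exact smul_notMem_closure_of_neg hC.convex hC.smul_mem hC.closure_no_line (subset_closure hx)
    (ne_of_mem_of_not_mem hx hC.zero_notMem) (sub_neg.2 hlt) hsum

lemma hilbertDist_nonneg (hC : IsOpenSalientCone C) (hx : x ∈ C) (hy : y ∈ C) :
    0 ≤ hilbertDist C x y :=
  log_nonneg (hC.one_le_coneGauge_mul hx hy)

lemma hilbertDist_le_of_sub_mem (hC : IsOpenSalientCone C) {k a b : ℝ} (hk : 1 ≤ k)
    (ha : 0 < a) (hab : a ≤ b) {p q : Fin d → ℝ} (hp : p ∈ C) (hq : q ∈ C)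
    (hu : p - a • q ∈ C) (hv : b • q - p ∈ C)
    (huv : hilbertDist C (p - a • q) (b • q - p) ≤ 2 * log k) :
    hilbertDist C p q ≤ (k - 1) / (k + 1) * log (b / a) := by
  have hb : 0 < b := ha.trans_le hab
  set u := p - a • q
  set v := b • q - p
  set l := coneGauge C u v
  set m := coneGauge C v u
  have hl : 0 < l := hC.coneGauge_pos hu hv
  have hm : 0 < m := hC.coneGauge_pos hv hu
  have hlm : l * m ≤ k ^ 2 := by
    rwa [hilbertDist, show 2 * log k = log (k ^ 2) by rw [log_pow]; norm_num,
      log_le_log_iff (by positivity) (by positivity)] at huv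
  have hpq : coneGauge C p q ≤ (l * b + a) / (1 + l) := by
    refine coneGauge_le_div hC.smul_mem (by positivity) (by positivity) ?_
    convert smul_coneGauge_sub_mem_closure hC.isOpen hC.smul_mem (x := u) hv using 1
    module
  have hqp : coneGauge C q p ≤ (1 + m) / (b + m * a) := by
    refine coneGauge_le_div hC.smul_mem (by positivity) (by positivity) ?_
    convert smul_coneGauge_sub_mem_closure hC.isOpen hC.smul_mem (x := v) hu using 1
    module
  calc hilbertDist C p q ≤ log ((l * b + a) / (1 + l) * ((1 + m) / (b + m * a))) :=
        log_le_log (mul_pos (hC.coneGauge_pos hp hq) (hC.coneGauge_pos hq hp))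
          (mul_le_mul hpq hqp coneGauge_nonneg (by positivity))
    _ ≤ (k - 1) / (k + 1) * log (b / a) := log_birkhoff_ratio_le hk ha hab hl hm hlm

lemma hilbertDist_map_le (hC : IsOpenSalientCone C) {A : (Fin d → ℝ) →ₗ[ℝ] (Fin d → ℝ)}
    (hA : A '' C ⊆ C) {k : ℝ} (hk : 1 ≤ k)
    (hAd : ∀ u ∈ C, ∀ v ∈ C, hilbertDist C (A u) (A v) ≤ 2 * log k)
    (hx : x ∈ C) (hy : y ∈ C) {t : ℝ} (ht : 1 < t) :
    hilbertDist C (A x) (A y) ≤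
      (k - 1) / (k + 1) * log (t ^ 2 * (coneGauge C x y * coneGauge C y x)) := by
  set β := coneGauge C x y
  set γ := coneGauge C y x
  have hβ : 0 < β := hC.coneGauge_pos hx hy
  have hγ : 0 < γ := hC.coneGauge_pos hy hx
  have hβγ : 1 ≤ β * γ := hC.one_le_coneGauge_mul hx hy
  have ha : 0 < (t * γ)⁻¹ := by positivity
  have hab : (t * γ)⁻¹ ≤ t * β := by
    rw [inv_le_iff_one_le_mul₀ (by positivity)]
    calc 1 ≤ β * γ := hβγ
      _ ≤ t ^ 2 * (β * γ) := le_mul_of_one_le_left (by positivity) (one_le_pow₀ ht.le)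
      _ = t * β * (t * γ) := by ring
  have hu : x - (t * γ)⁻¹ • y ∈ C := by
    refine sub_smul_mem_of_lt_inv_coneGauge hC.isOpen hC.convex hC.smul_mem hx ha ?_
    rw [mul_inv]
    exact mul_lt_of_lt_one_left (inv_pos.2 hγ) (inv_lt_one_of_one_lt₀ ht)
  have hv : (t * β) • y - x ∈ C :=
    smul_sub_mem_of_coneGauge_lt hC.isOpen hC.convex hC.smul_mem hy (lt_mul_left hβ ht)
  have hmem : ∀ z ∈ C, A z ∈ C := fun z hz ↦ hA ⟨z, hz, rfl⟩
  convert hC.hilbertDist_le_of_sub_mem hk ha hab (hmem x hx) (hmem y hy)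
    (by simpa using hmem _ hu) (by simpa using hmem _ hv) (by simpa using hAd _ hu _ hv) using 3
  rw [div_inv_eq_mul]
  ring

end IsOpenSalientCone

end Gauge

/-- Birkhoff's contraction theorem: if `C ⊆ ℝᵈ \ {0}` is an open convex cone whose
closure contains no one-dimensional linear subspace, and `A` is a linear map with
`A(C) ⊆ C` whose image has diameter `D` in the Hilbert pseudo-metric, then `A` contracts
the Hilbert pseudo-metric by the factor `δ = (√(e^D) − 1)/(√(e^D) + 1)`. -/
theorem birkhoff_contraction {d : ℕ} (C : Set (Fin d → ℝ))
    (hopen : IsOpen C) (hconv : Convex ℝ C) (h0 : (0 : Fin d → ℝ) ∉ C)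
    (hcone : ∀ x ∈ C, ∀ r : ℝ, 0 < r → r • x ∈ C)
    (hline : ∀ x : Fin d → ℝ, x ≠ 0 →
      ¬((Submodule.span ℝ {x} : Set (Fin d → ℝ)) ⊆ closure C))
    (A : (Fin d → ℝ) →ₗ[ℝ] (Fin d → ℝ)) (hA : A '' C ⊆ C)
    (D : ℝ) (hD : ∀ x ∈ C, ∀ y ∈ C, hilbertDist C (A x) (A y) ≤ D) :
    ∀ x ∈ C, ∀ y ∈ C,
      hilbertDist C (A x) (A y) ≤
        (Real.sqrt (Real.exp D) - 1) / (Real.sqrt (Real.exp D) + 1) *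
          hilbertDist C x y := by
  have hC : IsOpenSalientCone C := ⟨hopen, hconv, h0, hcone, hline⟩
  intro x hx y hy
  have hAx : A x ∈ C := hA ⟨x, hx, rfl⟩
  have hD0 : 0 ≤ D := (hC.hilbertDist_nonneg hAx hAx).trans (hD x hx x hx)
  set k := √(exp D)
  have hk : 1 ≤ k := one_le_sqrt.2 (one_le_exp hD0)
  have hAd : ∀ u ∈ C, ∀ v ∈ C, hilbertDist C (A u) (A v) ≤ 2 * log k := by
    rwa [log_sqrt (exp_pos D).le, log_exp, mul_div_cancel₀ _ two_ne_zero]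
  set g := coneGauge C x y * coneGauge C y x
  have hg : 0 < g := mul_pos (hC.coneGauge_pos hx hy) (hC.coneGauge_pos hy hx)
  have hlim : Tendsto (fun t : ℝ ↦ (k - 1) / (k + 1) * log (t ^ 2 * g)) (𝓝[>] 1)
      (𝓝 ((k - 1) / (k + 1) * hilbertDist C x y)) := by
    have hcont : ContinuousAt (fun t : ℝ ↦ (k - 1) / (k + 1) * log (t ^ 2 * g)) 1 :=
      continuousAt_const.mul (ContinuousAt.log (by fun_prop) (by simpa using hg.ne'))
    simpa [hilbertDist] using hcont.tendsto.mono_left nhdsWithin_le_nhds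
  exact ge_of_tendsto hlim (eventually_nhdsWithin_of_forall fun t ht ↦
    hC.hilbertDist_map_le hA hk hAd hx hy ht)
end

section
/- Let B be a d×d nonnegative integer matrix such that there exists a column index α with B e_α = e_α (i.e., the α-column is the standard basis vector e_α), and let λ, λ' ∈ ℝᴬ₊ with λ = Bᵀλ'. Then ‖B‖_∞ ≤ Δ(λ)·Δ(λ'), where Δ(μ) = max_{β,χ} μ_β/μ_χ and ‖B‖_∞ is the maximal entry of B. -/
/-- If `B` is a nonnegative integer matrix with some column equal to the standard basis
vector `e_α`, and `λ = Bᵀλ'` with `λ, λ' ∈ ℝᴬ₊`, then the maximal entry `‖B‖_∞` of `B`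
is bounded by the product `Δ(λ)·Δ(λ')` of the distortions `Δ(μ) = max μ_β/μ_χ`. -/
theorem norm_le_distortion_mul_distortion {A : Type*} [Fintype A] [Nonempty A]
    [DecidableEq A]
    (B : Matrix A A ℕ)
    (hcol : ∃ α : A, ∀ χ : A, B χ α = if χ = α then 1 else 0)
    (lam lam' : A → ℝ) (hlam : ∀ a, 0 < lam a) (hlam' : ∀ a, 0 < lam' a)
    (hrel : ∀ a, lam a = ∑ χ, (B χ a : ℝ) * lam' χ) :
    (((Finset.univ ×ˢ Finset.univ : Finset (A × A)).sup fun p => B p.1 p.2 : ℕ) : ℝ) ≤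
      ((Finset.univ ×ˢ Finset.univ : Finset (A × A)).sup'
        (Finset.univ_nonempty.product Finset.univ_nonempty)
        fun p => lam p.1 / lam p.2) *
      ((Finset.univ ×ˢ Finset.univ : Finset (A × A)).sup'
        (Finset.univ_nonempty.product Finset.univ_nonempty)
        fun p => lam' p.1 / lam' p.2) := by
  obtain ⟨α, hα⟩ := hcol
  have hne : ((Finset.univ ×ˢ Finset.univ : Finset (A × A))).Nonempty :=
    Finset.univ_nonempty.product Finset.univ_nonempty
  set S := (Finset.univ ×ˢ Finset.univ : Finset (A × A)).sup' hne
      fun p => lam p.1 / lam p.2 with hS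
  set S' := (Finset.univ ×ˢ Finset.univ : Finset (A × A)).sup' hne
      fun p => lam' p.1 / lam' p.2 with hS'
  -- lam α = lam' α
  have hlamα : lam α = lam' α := by
    rw [hrel α]
    rw [Finset.sum_eq_single α]
    · simp [hα α]
    · intro b _ hb
      simp [hα b, hb]
    · simp
  -- key bound for each entry
  obtain ⟨p, _, hp⟩ := Finset.exists_mem_eq_sup (Finset.univ ×ˢ Finset.univ : Finset (A × A))
    hne (fun p => B p.1 p.2)
  rw [hp]
  obtain ⟨χ, β⟩ := p
  have h1 : (B χ β : ℝ) * lam' χ ≤ lam β := by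
    rw [hrel β]
    apply Finset.single_le_sum (f := fun χ => (B χ β : ℝ) * lam' χ)
    · intro i _
      exact mul_nonneg (Nat.cast_nonneg _) (hlam' i).le
    · simp
  have h2 : (B χ β : ℝ) ≤ lam β / lam' χ :=
    (le_div_iff₀ (hlam' χ)).2 h1
  have hSa : lam β / lam α ≤ S :=
    Finset.le_sup' (fun p => lam p.1 / lam p.2) (by simp : (β, α) ∈ _)
  have hSb : lam' α / lam' χ ≤ S' :=
    Finset.le_sup' (fun p => lam' p.1 / lam' p.2) (by simp : (α, χ) ∈ _)
  have heq : lam β / lam' χ = (lam β / lam α) * (lam' α / lam' χ) := by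
    rw [hlamα, div_mul_div_comm, mul_comm (lam' α) (lam' χ),
      mul_div_mul_right _ _ (hlam' α).ne']
  calc (B χ β : ℝ) ≤ lam β / lam' χ := h2
    _ = (lam β / lam α) * (lam' α / lam' χ) := heq
    _ ≤ S * S' := by
        have h0 : (0:ℝ) ≤ lam' α / lam' χ := div_nonneg (hlam' α).le (hlam' χ).le
        have h0' : (0:ℝ) ≤ lam β / lam α := div_nonneg (hlam β).le (hlam α).le
        exact mul_le_mul hSa hSb h0 (le_trans h0' hSa)
end

section
/- Let π = (πᵗ, πᵇ) be an admissible pair of bijections from a finite alphabet A (|A| = d ≥ 2) to {1,…,d}, and let τ ∈ ℝᴬ be a suspension datum, i.e., for every 1 ≤ k ≤ d−1: Σ_{πᵗ(χ)≤k} τ_χ > 0 and Σ_{πᵇ(χ)≤k} τ_χ < 0. Define h ∈ ℝᴬ by h_α = Σ_{πᵗ(χ)≤πᵗ(α)} τ_χ − Σ_{πᵇ(χ)≤πᵇ(α)} τ_χ. Then h_α > 0 for every α ∈ A, and moreover ‖τ‖_∞ ≤ ‖h‖_∞. -/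
open Finset

lemma sum_filter_le_equiv {A : Type*} [Fintype A] {d : ℕ} (σ : A ≃ Fin d)
    (τ : A → ℝ) (α : A) :
    ∑ χ ∈ Finset.univ.filter (fun χ => (σ χ : ℕ) ≤ (σ α : ℕ)), τ χ
      = (∑ χ ∈ Finset.univ.filter (fun χ => (σ χ : ℕ) < (σ α : ℕ)), τ χ) + τ α := by
  classical
  have h : Finset.univ.filter (fun χ => (σ χ : ℕ) ≤ (σ α : ℕ))
      = insert α (Finset.univ.filter (fun χ => (σ χ : ℕ) < (σ α : ℕ))) := by
    ext χ
    simp only [Finset.mem_filter, Finset.mem_univ, true_and, Finset.mem_insert]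
    constructor
    · intro h
      rcases eq_or_lt_of_le h with h | h
      · exact Or.inl (σ.injective (Fin.val_injective h.symm)).symm
      · exact Or.inr h
    · rintro (rfl | h)
      · exact le_refl _
      · exact h.le
  rw [h, Finset.sum_insert (by simp)]
  ring

/-- For an admissible combinatorial datum `π = (πᵗ, πᵇ)` (bijections `A ≃ Fin d`,
0-indexed, with no proper common initial block) and a suspension datum `τ`, the height
vector `h_α = Σ_{πᵗ(χ)≤πᵗ(α)} τ_χ − Σ_{πᵇ(χ)≤πᵇ(α)} τ_χ` is positive and satisfies
`‖τ‖_∞ ≤ ‖h‖_∞`. -/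
theorem height_positive_and_dominates {A : Type*} [Fintype A] [Nonempty A]
    (d : ℕ) (hd : 2 ≤ d) (hcard : Fintype.card A = d)
    (πt πb : A ≃ Fin d)
    (hadm : ∀ k : ℕ, 0 < k → k < d →
      {χ : A | (πt χ : ℕ) < k} ≠ {χ : A | (πb χ : ℕ) < k})
    (τ : A → ℝ)
    (hsusp : ∀ k : ℕ, 0 < k → k < d →
      (0 < ∑ χ ∈ Finset.univ.filter (fun χ => (πt χ : ℕ) < k), τ χ) ∧
      ((∑ χ ∈ Finset.univ.filter (fun χ => (πb χ : ℕ) < k), τ χ) < 0)) :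
    (∀ α : A,
      0 < (∑ χ ∈ Finset.univ.filter (fun χ => (πt χ : ℕ) ≤ (πt α : ℕ)), τ χ) -
          (∑ χ ∈ Finset.univ.filter (fun χ => (πb χ : ℕ) ≤ (πb α : ℕ)), τ χ)) ∧
    (Finset.univ.sup' Finset.univ_nonempty fun χ => |τ χ|) ≤
      (Finset.univ.sup' Finset.univ_nonempty fun α =>
        (∑ χ ∈ Finset.univ.filter (fun χ => (πt χ : ℕ) ≤ (πt α : ℕ)), τ χ) -
        (∑ χ ∈ Finset.univ.filter (fun χ => (πb χ : ℕ) ≤ (πb α : ℕ)), τ χ)) := by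
  -- partial sums of the top and bottom rows
  set Tt : ℕ → ℝ := fun k => ∑ χ ∈ Finset.univ.filter (fun χ => (πt χ : ℕ) < k), τ χ with hTt
  set Tb : ℕ → ℝ := fun k => ∑ χ ∈ Finset.univ.filter (fun χ => (πb χ : ℕ) < k), τ χ with hTb
  -- the height, in the "≤" form appearing in the statement
  set h : A → ℝ := fun α =>
      (∑ χ ∈ Finset.univ.filter (fun χ => (πt χ : ℕ) ≤ (πt α : ℕ)), τ χ) -
      (∑ χ ∈ Finset.univ.filter (fun χ => (πb χ : ℕ) ≤ (πb α : ℕ)), τ χ) with hh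
  have hform : ∀ α : A, h α = Tt (πt α : ℕ) - Tb (πb α : ℕ) := by
    intro α
    simp only [hh, sum_filter_le_equiv πt τ α, sum_filter_le_equiv πb τ α, hTt, hTb]
    ring
  have Tt_zero : Tt 0 = 0 := by simp [hTt]
  have Tb_zero : Tb 0 = 0 := by simp [hTb]
  have Tt_nonneg : ∀ k, k < d → 0 ≤ Tt k := by
    intro k hk
    rcases Nat.eq_zero_or_pos k with rfl | hk0
    · exact le_of_eq Tt_zero.symm
    · exact (hsusp k hk0 hk).1.le
  have Tb_nonpos : ∀ k, k < d → Tb k ≤ 0 := by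
    intro k hk
    rcases Nat.eq_zero_or_pos k with rfl | hk0
    · exact le_of_eq Tb_zero
    · exact (hsusp k hk0 hk).2.le
  -- telescoping: Tt(σα+1) = Tt(σα) + τα
  have Tt_succ : ∀ α : A, Tt ((πt α : ℕ) + 1) = Tt (πt α : ℕ) + τ α := by
    intro α
    have : Finset.univ.filter (fun χ => (πt χ : ℕ) < (πt α : ℕ) + 1)
        = Finset.univ.filter (fun χ => (πt χ : ℕ) ≤ (πt α : ℕ)) := by
      apply Finset.filter_congr; intro χ _; simp [Nat.lt_succ_iff]
    simp only [hTt]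
    rw [this, sum_filter_le_equiv πt τ α]
  have Tb_succ : ∀ α : A, Tb ((πb α : ℕ) + 1) = Tb (πb α : ℕ) + τ α := by
    intro α
    have : Finset.univ.filter (fun χ => (πb χ : ℕ) < (πb α : ℕ) + 1)
        = Finset.univ.filter (fun χ => (πb χ : ℕ) ≤ (πb α : ℕ)) := by
      apply Finset.filter_congr; intro χ _; simp [Nat.lt_succ_iff]
    simp only [hTb]
    rw [this, sum_filter_le_equiv πb τ α]
  -- total sums agree
  have Tt_top : Tt d = ∑ χ, τ χ := by
    simp only [hTt]
    rw [Finset.filter_true_of_mem (fun χ _ => (πt χ).isLt)]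
  have Tb_top : Tb d = ∑ χ, τ χ := by
    simp only [hTb]
    rw [Finset.filter_true_of_mem (fun χ _ => (πb χ).isLt)]
  -- first letters differ
  have first_ne : ∀ α : A, ¬((πt α : ℕ) = 0 ∧ (πb α : ℕ) = 0) := by
    rintro α ⟨h1, h2⟩
    apply hadm 1 one_pos (by omega)
    have e1 : ∀ χ : A, (πt χ : ℕ) < 1 ↔ χ = α := by
      intro χ
      constructor
      · intro hχ
        apply πt.injective
        apply Fin.val_injective
        show (πt χ : ℕ) = (πt α : ℕ)
        omega
      · rintro rfl; omega
    have e2 : ∀ χ : A, (πb χ : ℕ) < 1 ↔ χ = α := by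
      intro χ
      constructor
      · intro hχ
        apply πb.injective
        apply Fin.val_injective
        show (πb χ : ℕ) = (πb α : ℕ)
        omega
      · rintro rfl; omega
    ext χ
    simp only [Set.mem_setOf_eq, e1 χ, e2 χ]
  -- last letters differ
  have last_ne : ∀ α : A, ¬((πt α : ℕ) = d - 1 ∧ (πb α : ℕ) = d - 1) := by
    rintro α ⟨h1, h2⟩
    apply hadm (d - 1) (by omega) (by omega)
    have e1 : ∀ χ : A, (πt χ : ℕ) < d - 1 ↔ χ ≠ α := by
      intro χ
      have ht := (πt χ).isLt
      constructor
      · rintro hχ rfl; omega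
      · intro hne
        by_contra hc
        apply hne
        apply πt.injective
        apply Fin.val_injective
        show (πt χ : ℕ) = (πt α : ℕ)
        omega
    have e2 : ∀ χ : A, (πb χ : ℕ) < d - 1 ↔ χ ≠ α := by
      intro χ
      have hb := (πb χ).isLt
      constructor
      · rintro hχ rfl; omega
      · intro hne
        by_contra hc
        apply hne
        apply πb.injective
        apply Fin.val_injective
        show (πb χ : ℕ) = (πb α : ℕ)
        omega
    ext χ
    simp only [Set.mem_setOf_eq, e1 χ, e2 χ]
  -- positivity of the height
  have hpos : ∀ α : A, 0 < h α := by
    intro α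
    rw [hform]
    have ht := (πt α).isLt
    have hb := (πb α).isLt
    rcases Nat.eq_zero_or_pos (πt α : ℕ) with h1 | h1
    · rcases Nat.eq_zero_or_pos (πb α : ℕ) with h2 | h2
      · exact absurd ⟨h1, h2⟩ (first_ne α)
      · rw [h1, Tt_zero]
        have := (hsusp _ h2 hb).2
        linarith
    · have := (hsusp _ h1 ht).1
      have := Tb_nonpos _ hb
      linarith
  refine ⟨hpos, ?_⟩
  -- sup bound
  apply Finset.sup'_le
  intro χ _
  -- it suffices to find α with |τ χ| ≤ h α
  have suffices_bound : ∀ (α : A) (x : ℝ), x ≤ h α →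
      x ≤ Finset.univ.sup' Finset.univ_nonempty h := fun α x hα =>
    le_trans hα (Finset.le_sup' h (Finset.mem_univ α))
  have hSlt := (πt χ).isLt
  have hBlt := (πb χ).isLt
  rcases le_or_gt 0 (τ χ) with hτ | hτ
  · -- τ χ ≥ 0 : bound via the top row
    rw [abs_of_nonneg hτ]
    rcases Nat.lt_or_ge ((πt χ : ℕ) + 1) d with hlt | hge
    · -- take α with πt α = πt χ + 1
      set α := πt.symm ⟨(πt χ : ℕ) + 1, hlt⟩ with hα
      apply suffices_bound α _
      rw [hform]
      have hπα : (πt α : ℕ) = (πt χ : ℕ) + 1 := by simp [hα]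
      have h1 : Tt (πt α : ℕ) = Tt (πt χ : ℕ) + τ χ := by rw [hπα, Tt_succ]
      have h2 := Tb_nonpos _ (πb α).isLt
      have h3 := Tt_nonneg _ hSlt
      linarith
    · -- χ is last in the top row
      have hS : (πt χ : ℕ) = d - 1 := by omega
      apply suffices_bound χ _
      have hB : (πb χ : ℕ) < d - 1 := by
        have := last_ne χ
        omega
      rw [hform]
      -- h χ = Tt(d-1) - Tb(πb χ);  τ χ = Tt d - Tt(d-1) ≤ Tt d = Σ τ
      have h2 := Tb_nonpos _ hBlt
      -- Tt d = Tt (πt χ) + τ χ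
      have h4 : Tt d = Tt (πt χ : ℕ) + τ χ := by
        rw [← Tt_succ χ, hS]
        congr 1
        omega
      have h3 := Tt_nonneg _ hSlt
      have h5 : Tb ((πb χ : ℕ) + 1) ≤ 0 := Tb_nonpos _ (by omega)
      have h6 := Tb_succ χ
      linarith
  · -- τ χ < 0 : bound via the bottom row
    rw [abs_of_neg hτ]
    rcases Nat.lt_or_ge ((πb χ : ℕ) + 1) d with hlt | hge
    · set α := πb.symm ⟨(πb χ : ℕ) + 1, hlt⟩ with hα
      apply suffices_bound α _
      rw [hform]
      have hπα : (πb α : ℕ) = (πb χ : ℕ) + 1 := by simp [hα]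
      have h1 : Tb (πb α : ℕ) = Tb (πb χ : ℕ) + τ χ := by rw [hπα, Tb_succ]
      have h2 := Tt_nonneg _ (πt α).isLt
      have h3 := Tb_nonpos _ hBlt
      linarith
    · have hB : (πb χ : ℕ) = d - 1 := by omega
      apply suffices_bound χ _
      have hS : (πt χ : ℕ) < d - 1 := by
        have := last_ne χ
        omega
      rw [hform]
      have h2 := Tt_nonneg _ hSlt
      have h4 : Tb d = Tb (πb χ : ℕ) + τ χ := by
        rw [← Tb_succ χ, hB]
        congr 1
        omega
      have h3 := Tb_nonpos _ hBlt
      have h5 : 0 ≤ Tt ((πt χ : ℕ) + 1) := Tt_nonneg _ (by omega)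
      have h6 := Tt_succ χ
      linarith
end
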